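/- For every nonnegative integer n, the Hankel determinant det[b_{i+j}]_{0≤i,j≤n} of the Apéry numbers b_m = ∑_{k=0}^m C(m,k)^2 C(m+k,k) is divisible by 10^n. -/

import Mathlib

/-!
Every summand of `b_m` factors through the base-`p` digits by Lucas's theorem, so
`b_m ≡ b_{m / p} * b_{m % p} (mod p)` for every prime `p`. Since `b_r ≡ 3 ^ r (mod p)` for the
digits `r < p` when `p = 2, 5`, Fermat's little theorem gives `b_m ≡ 3 ^ m (mod 10)`, hence
`b_{m+1} ≡ 3 b_m (mod 10)`. Subtracting `3` times each column of the Hankel matrix from the next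
column therefore leaves every column but the first divisible by `10`.
-/

open Finset

theorem Finset.sum_range_mul_eq_sum_sum {M : Type*} [AddCommMonoid M] (f : ℕ → M) (p n : ℕ) :
    ∑ k ∈ range (p * n), f k = ∑ a ∈ range n, ∑ b ∈ range p, f (p * a + b) := by
  induction n with
  | zero => simp
  | succ n ih => rw [mul_add_one, sum_range_add, ih, sum_range_succ]

theorem Matrix.pow_dvd_det_hankel_of_dvd_sub_mul {R : Type*} [CommRing R] (a : ℕ → R) (c x : R)
    (h : ∀ m, x ∣ a (m + 1) - c * a m) (n : ℕ) :
    x ^ n ∣ (Matrix.of fun i j : Fin (n + 1) => a (i + j)).det := by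
  choose d hd using h
  let v : Fin (n + 1) → R := Fin.cons 1 fun _ => x
  let B : Matrix (Fin (n + 1)) (Fin (n + 1)) R :=
    Matrix.of fun i j => Fin.cases (a i) (fun j => d (i + j)) j
  have hcol : (Matrix.of fun i j : Fin (n + 1) => a (i + j)).det =
      (Matrix.of fun i j => v j * B i j).det := by
    refine Matrix.det_eq_of_forall_col_eq_smul_add_pred (fun _ => c) (fun i => by simp [v, B])
      fun i j => ?_
    simp only [Matrix.of_apply, Fin.val_succ, Fin.val_castSucc, v, B, Fin.cons_succ,
      Fin.cases_succ, ← hd, ← add_assoc]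
    ring
  have hprod : ∏ j, v j = x ^ n := by simp [v, Fin.prod_cons]
  rw [hcol, Matrix.det_mul_row, hprod]
  exact dvd_mul_right _ _

theorem Nat.choose_cast_zmod_eq_mul (p : ℕ) [Fact p.Prime] (n k : ℕ) :
    (n.choose k : ZMod p) = (n % p).choose (k % p) * (n / p).choose (k / p) := by
  exact_mod_cast (ZMod.natCast_eq_natCast_iff _ _ _).2
    Choose.choose_modEq_choose_mod_mul_choose_div_nat

theorem Nat.choose_mul_add_mul_add_cast_zmod (p : ℕ) [hp : Fact p.Prime] (a b c d : ℕ)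
    (hb : b < p) (hd : d < p) :
    ((p * a + b).choose (p * c + d) : ZMod p) = b.choose d * a.choose c := by
  have hp0 := hp.out.pos
  rw [Nat.choose_cast_zmod_eq_mul, Nat.mul_add_mod, Nat.mul_add_mod, Nat.mod_eq_of_lt hb,
    Nat.mod_eq_of_lt hd, Nat.mul_add_div hp0, Nat.mul_add_div hp0, Nat.div_eq_of_lt hb,
    Nat.div_eq_of_lt hd, add_zero, add_zero]

theorem Nat.choose_add_cast_zmod_eq_mul (p : ℕ) [Fact p.Prime] (q r k₁ k₀ : ℕ)
    (hr : r < p) (hk₀ : k₀ < p) :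
    ((p * q + r + (p * k₁ + k₀)).choose (p * k₁ + k₀) : ZMod p) =
      (r + k₀).choose k₀ * (q + k₁).choose k₁ := by
  by_cases hc : r + k₀ < p
  · rw [show p * q + r + (p * k₁ + k₀) = p * (q + k₁) + (r + k₀) by ring,
      Nat.choose_mul_add_mul_add_cast_zmod p _ _ _ _ hc hk₀]
  · -- a carry occurs in the last digit, and then both sides vanish
    have hzero : (r + k₀ - p).choose k₀ = 0 := Nat.choose_eq_zero_of_lt (by omega)
    have hrk := Nat.choose_mul_add_mul_add_cast_zmod p 1 (r + k₀ - p) 0 k₀ (by omega) hk₀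
    rw [show p * q + r + (p * k₁ + k₀) = p * (q + k₁ + 1) + (r + k₀ - p) by
        rw [mul_add_one, mul_add]; omega,
      Nat.choose_mul_add_mul_add_cast_zmod p _ _ _ _ (by omega) hk₀]
    rw [show p * 1 + (r + k₀ - p) = r + k₀ by omega, mul_zero, zero_add] at hrk
    simp [hrk, hzero]

def aperyTerm (m k : ℕ) : ℕ := m.choose k ^ 2 * (m + k).choose k

def aperyB (m : ℕ) : ℕ := ∑ k ∈ range (m + 1), aperyTerm m k

theorem aperyB_eq_sum_range {m N : ℕ} (h : m < N) :
    aperyB m = ∑ k ∈ range N, aperyTerm m k := by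
  refine sum_subset (range_subset_range.2 (by omega)) fun k _ hk => ?_
  simp only [mem_range, not_lt] at hk
  simp [aperyTerm, Nat.choose_eq_zero_of_lt (show m < k by omega)]

theorem aperyTerm_cast_zmod_eq_mul (p : ℕ) [Fact p.Prime] (q r k₁ k₀ : ℕ)
    (hr : r < p) (hk₀ : k₀ < p) :
    (aperyTerm (p * q + r) (p * k₁ + k₀) : ZMod p) = aperyTerm q k₁ * aperyTerm r k₀ := by
  simp only [aperyTerm, Nat.cast_mul, Nat.cast_pow,
    Nat.choose_mul_add_mul_add_cast_zmod p _ _ _ _ hr hk₀,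
    Nat.choose_add_cast_zmod_eq_mul p _ _ _ _ hr hk₀]
  ring

theorem aperyB_cast_zmod_eq_mul (p : ℕ) [hp : Fact p.Prime] (m : ℕ) :
    (aperyB m : ZMod p) = aperyB (m / p) * aperyB (m % p) := by
  have hr : m % p < p := Nat.mod_lt _ hp.out.pos
  calc (aperyB m : ZMod p)
      = ∑ k ∈ range (p * (m / p + 1)), (aperyTerm (p * (m / p) + m % p) k : ZMod p) := by
        rw [Nat.div_add_mod, aperyB_eq_sum_range (N := p * (m / p + 1)) (by
          rw [mul_add_one]; have := Nat.div_add_mod m p; omega)]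
        push_cast; rfl
    _ = ∑ k₁ ∈ range (m / p + 1), ∑ k₀ ∈ range p,
          (aperyTerm (m / p) k₁ : ZMod p) * aperyTerm (m % p) k₀ := by
        rw [sum_range_mul_eq_sum_sum]
        refine sum_congr rfl fun k₁ _ => sum_congr rfl fun k₀ hk₀ => ?_
        exact aperyTerm_cast_zmod_eq_mul p _ _ _ _ hr (mem_range.1 hk₀)
    _ = aperyB (m / p) * aperyB (m % p) := by
        rw [← sum_mul_sum, aperyB_eq_sum_range hr, aperyB]; push_cast; rfl

theorem eq_pow_of_eq_mul_div_mod {p : ℕ} [hp : Fact p.Prime] (f : ℕ → ZMod p) (g : ZMod p)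
    (hsmall : ∀ r < p, f r = g ^ r) (hmul : ∀ m, f m = f (m / p) * f (m % p)) (m : ℕ) :
    f m = g ^ m := by
  induction m using Nat.strong_induction_on with
  | _ m ih =>
    rcases lt_or_ge m p with hm | hm
    · exact hsmall m hm
    · have hdiv : m / p < m := Nat.div_lt_self (by have := hp.out.pos; omega) hp.out.one_lt
      calc f m = g ^ (m / p) * g ^ (m % p) := by
            rw [hmul, ih _ hdiv, hsmall _ (Nat.mod_lt _ hp.out.pos)]
        _ = (g ^ p) ^ (m / p) * g ^ (m % p) := by rw [ZMod.pow_card]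
        _ = g ^ m := by rw [← pow_mul, ← pow_add, Nat.div_add_mod]

theorem aperyB_modEq_three_pow_of_lt_prime (p : ℕ) [Fact p.Prime]
    (hsmall : ∀ r < p, aperyB r ≡ 3 ^ r [MOD p]) (m : ℕ) : aperyB m ≡ 3 ^ m [MOD p] := by
  rw [← ZMod.natCast_eq_natCast_iff, Nat.cast_pow]
  refine eq_pow_of_eq_mul_div_mod (fun m => (aperyB m : ZMod p)) 3 (fun r hr => ?_)
    (aperyB_cast_zmod_eq_mul p) m
  exact_mod_cast (ZMod.natCast_eq_natCast_iff _ _ _).2 (hsmall r hr)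

theorem aperyB_modEq_three_pow (m : ℕ) : aperyB m ≡ 3 ^ m [MOD 10] := by
  have : Fact (Nat.Prime 5) := ⟨Nat.prime_five⟩
  exact (Nat.modEq_and_modEq_iff_modEq_mul (by norm_num)).1
    ⟨aperyB_modEq_three_pow_of_lt_prime 2 (by decide) m,
      aperyB_modEq_three_pow_of_lt_prime 5 (by decide) m⟩

theorem ten_dvd_aperyB_succ_sub (m : ℕ) : (10 : ℤ) ∣ aperyB (m + 1) - 3 * aperyB m := by
  have h : 3 * aperyB m ≡ aperyB (m + 1) [MOD 10] :=
    ((aperyB_modEq_three_pow m).mul_left 3).trans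
      (by rw [← pow_succ']; exact (aperyB_modEq_three_pow (m + 1)).symm)
  exact_mod_cast (Int.natCast_modEq_iff.2 h).dvd

theorem apery_b_hankel_det_div (n : ℕ) :
    (10 : ℤ) ^ n ∣
      Matrix.det (Matrix.of fun i j : Fin (n + 1) =>
        ((∑ k ∈ Finset.range (i.1 + j.1 + 1),
            ((i.1 + j.1).choose k) ^ 2 * (i.1 + j.1 + k).choose k : ℕ) : ℤ)) :=
  Matrix.pow_dvd_det_hankel_of_dvd_sub_mul (fun m => (aperyB m : ℤ)) 3 10
    ten_dvd_aperyB_succ_sub n
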